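/- arXiv:1112.3687 — 6 statements merged into one kernel-verified Lean document; each statement's English description precedes it below -/
import Mathlib

section
/- Let τ : ℝ → ℝ and φ, φ̃ : ℝ × ℝ → ℝ be smooth functions. Then the triple (τ, φ, φ̃) satisfies the stochastic determining equations for the SDE dX(t) = dW(t) (drift f = 0, diffusion g = 1), namely: ∂φ/∂t + (1/2)·∂²φ/∂x² = 0; ∂φ̃/∂t + (1/2)·∂²φ̃/∂x² = 0; (1/2)·τ'(t) = ∂φ/∂x; and ∂φ̃/∂x = 0, for all (t,x), if and only if there exist real constants c₁, c₂, c₃, c₄ such that τ(t) = 2c₁t + c₃, φ(t,x) = c₁x + c₂, and φ̃(t,x) = c₄. In particular the stochastic symmetries of Brownian motion are spanned by the deterministic generators 2t ∂/∂t + x ∂/∂x, ∂/∂x, ∂/∂t together with the purely stochastic generator [∂/∂x]^S. -/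
private lemma deriv_eq_const_aux {f : ℝ → ℝ} (hf : Differentiable ℝ f) {c : ℝ}
    (h : ∀ x, deriv f x = c) : ∀ x, f x = c * x + f 0 := by
  intro x
  have hg : Differentiable ℝ (fun y => f y - c * y) :=
    hf.sub ((differentiable_id.const_mul c))
  have hder : ∀ y, deriv (fun y => f y - c * y) y = 0 := by
    intro y
    have hd : HasDerivAt (fun y => f y - c * y) (deriv f y - c * 1) y :=
      (hf y).hasDerivAt.sub ((hasDerivAt_id y).const_mul c)
    rw [hd.deriv, h y]; ring
  have := is_const_of_deriv_eq_zero hg hder x 0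
  simp at this
  linarith

private lemma slice_x_diff {φ : ℝ → ℝ → ℝ} (hφ : ContDiff ℝ (⊤ : ℕ∞) (Function.uncurry φ)) (t : ℝ) :
    Differentiable ℝ (φ t) := by
  have : ContDiff ℝ (⊤ : ℕ∞) (fun x => Function.uncurry φ (t, x)) :=
    hφ.comp (contDiff_const.prodMk contDiff_id)
  exact this.differentiable (by simp)

private lemma slice_t_diff {φ : ℝ → ℝ → ℝ} (hφ : ContDiff ℝ (⊤ : ℕ∞) (Function.uncurry φ)) (x : ℝ) :
    Differentiable ℝ (fun s => φ s x) := by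
  have : ContDiff ℝ (⊤ : ℕ∞) (fun s => Function.uncurry φ (s, x)) :=
    hφ.comp (contDiff_id.prodMk contDiff_const)
  exact this.differentiable (by simp)

/-- Stochastic determining equations for the Brownian motion SDE `dX = dW`
(drift `f = 0`, diffusion `g = 1`):
`φ_t + (1/2)·φ_xx = 0`, `φ̃_t + (1/2)·φ̃_xx = 0`, `(1/2)·τ' = φ_x`, `φ̃_x = 0`
hold for all `(t,x)` iff `τ(t) = 2c₁t + c₃`, `φ(t,x) = c₁x + c₂`, `φ̃(t,x) = c₄`. -/
theorem brownian_stochastic_symmetries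
    (τ : ℝ → ℝ) (φ φt : ℝ → ℝ → ℝ)
    (hτ : ContDiff ℝ (⊤ : ℕ∞) τ) (hφ : ContDiff ℝ (⊤ : ℕ∞) (Function.uncurry φ))
    (hφt : ContDiff ℝ (⊤ : ℕ∞) (Function.uncurry φt)) :
    ((∀ t x : ℝ,
        deriv (fun s => φ s x) t + (1 / 2) * deriv (deriv (φ t)) x = 0) ∧
     (∀ t x : ℝ,
        deriv (fun s => φt s x) t + (1 / 2) * deriv (deriv (φt t)) x = 0) ∧
     (∀ t x : ℝ, (1 / 2) * deriv τ t = deriv (φ t) x) ∧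
     (∀ t x : ℝ, deriv (φt t) x = 0)) ↔
    (∃ c₁ c₂ c₃ c₄ : ℝ,
        (∀ t : ℝ, τ t = 2 * c₁ * t + c₃) ∧
        (∀ t x : ℝ, φ t x = c₁ * x + c₂) ∧
        (∀ t x : ℝ, φt t x = c₄)) := by
  constructor
  · rintro ⟨h1, h2, h3, h4⟩
    -- φ_xx = 0 since φ_x is constant in x
    have hφx : ∀ t, deriv (φ t) = fun _ => (1/2 : ℝ) * deriv τ t := by
      intro t; funext x; exact (h3 t x).symm
    have hφxx : ∀ t x, deriv (deriv (φ t)) x = 0 := by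
      intro t x; rw [hφx t]; simp
    have hφt0 : ∀ t x, deriv (fun s => φ s x) t = 0 := by
      intro t x; have := h1 t x; rw [hφxx t x] at this; linarith
    have hφconst_t : ∀ t x, φ t x = φ 0 x := fun t x =>
      is_const_of_deriv_eq_zero (slice_t_diff hφ x) (fun s => hφt0 s x) t 0
    -- τ' is constant
    have hτ' : ∀ t, deriv τ t = deriv τ 0 := by
      intro t
      have e1 := h3 t 0
      have e2 := h3 0 0
      have : deriv (φ t) 0 = deriv (φ 0) 0 := by
        have : φ t = φ 0 := funext fun x => hφconst_t t x
        rw [this]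
      rw [this] at e1
      rw [← e2] at e1
      linarith
    refine ⟨deriv τ 0 / 2, φ 0 0, τ 0, φt 0 0, ?_, ?_, ?_⟩
    · intro t
      have := deriv_eq_const_aux (hτ.differentiable (by simp)) hτ' t
      rw [this]; ring
    · intro t x
      rw [hφconst_t t x]
      have hd : ∀ y, deriv (φ 0) y = deriv τ 0 / 2 := by
        intro y
        have := h3 0 y
        linarith
      have := deriv_eq_const_aux (slice_x_diff hφ 0) hd x
      linarith [this]
    · intro t x
      have hx : ∀ s y, φt s y = φt s 0 := fun s y =>
        is_const_of_deriv_eq_zero (slice_x_diff hφt s) (h4 s) y 0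
      have hφtx : ∀ s, deriv (φt s) = fun _ => (0:ℝ) := by
        intro s; funext y; exact h4 s y
      have hφtxx : ∀ s y, deriv (deriv (φt s)) y = 0 := by
        intro s y; rw [hφtx s]; simp
      have ht0 : ∀ s y, deriv (fun u => φt u y) s = 0 := by
        intro s y; have := h2 s y; rw [hφtxx s y] at this; linarith
      have hct : ∀ s y, φt s y = φt 0 y := fun s y =>
        is_const_of_deriv_eq_zero (slice_t_diff hφt y) (fun u => ht0 u y) s 0
      rw [hct t x, hx 0 x]
  · rintro ⟨c₁, c₂, c₃, c₄, hτe, hφe, hφte⟩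
    have hτf : τ = fun t => 2 * c₁ * t + c₃ := funext hτe
    have hφf : ∀ t, φ t = fun x => c₁ * x + c₂ := fun t => funext (hφe t)
    have hφtf : ∀ t, φt t = fun _ => c₄ := fun t => funext (hφte t)
    have hφs : ∀ x, (fun s => φ s x) = fun _ => c₁ * x + c₂ := by
      intro x; funext s; exact hφe s x
    have hφts : ∀ x, (fun s => φt s x) = fun _ => c₄ := by
      intro x; funext s; exact hφte s x
    have hdφ : ∀ t, deriv (φ t) = fun _ => c₁ := by
      intro t; rw [hφf t]; funext y
      have hd : HasDerivAt (fun x => c₁ * x + c₂) (c₁ * 1) y :=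
        ((hasDerivAt_id y).const_mul c₁).add_const c₂
      rw [hd.deriv]; ring
    refine ⟨?_, ?_, ?_, ?_⟩
    · intro t x; rw [hφs x, hdφ t]; simp
    · intro t x; rw [hφts x, hφtf t]; simp
    · intro t x
      rw [hτf, hdφ t]
      have hd : HasDerivAt (fun t => 2 * c₁ * t + c₃) (2 * c₁ * 1) t :=
        ((hasDerivAt_id t).const_mul (2 * c₁)).add_const c₃
      have : deriv (fun t => 2 * c₁ * t + c₃) t = 2 * c₁ := by
        rw [hd.deriv]; ring
      rw [this]; ring
    · intro t x; rw [hφtf t]; simp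
end

section
/- Let a, b be real numbers with a ≠ 0, and let τ : ℝ → ℝ and φ : ℝ × ℝ → ℝ be smooth functions. Then (τ, φ) satisfies the determining equations for (deterministic) symmetries of the Langevin equation dX(t) = aX(t)dt + b dW(t) (drift f(t,x) = ax, diffusion g ≡ b), namely τ'(t)·ax + a·φ = ∂φ/∂t + (∂φ/∂x)·ax + (1/2)·(∂²φ/∂x²)·b² and (1/2)·τ'(t) = ∂φ/∂x for all (t,x), if and only if there exist real constants c₁, c₂, c₃ such that τ(t) = (c₂/a)·e^{2at} + c₃ and φ(t,x) = c₁·e^{at} + c₂·e^{2at}·x. (Equivalently, the symmetry algebra is spanned by X₁ = e^{at} ∂/∂x, X₂ = (e^{2at}/a) ∂/∂t + e^{2at} x ∂/∂x, X₃ = ∂/∂t.) -/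
lemma expDeriv (k t : ℝ) : HasDerivAt (fun s => Real.exp (k*s)) (k * Real.exp (k*t)) t := by
  have h1 : HasDerivAt (fun s : ℝ => k*s) k t := by simpa using (hasDerivAt_id t).const_mul k
  exact ((Real.hasDerivAt_exp (k*t)).comp t h1).congr_deriv (mul_comm _ _)

lemma ode_solve (k : ℝ) (u : ℝ → ℝ) (hu : Differentiable ℝ u)
    (h : ∀ t, deriv u t = k * u t) (t : ℝ) : u t = u 0 * Real.exp (k * t) := by
  have hG : ∀ s, HasDerivAt (fun s => u s * Real.exp (-k * s))
      (deriv u s * Real.exp (-k*s) + u s * (-k * Real.exp (-k*s))) s :=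
    fun s => ((hu s).hasDerivAt).mul (expDeriv (-k) s)
  have hGd : Differentiable ℝ (fun s => u s * Real.exp (-k*s)) := fun s => (hG s).differentiableAt
  have hG0 : ∀ s, deriv (fun s => u s * Real.exp (-k*s)) s = 0 := by
    intro s; rw [(hG s).deriv, h]; ring
  have hc := is_const_of_deriv_eq_zero hGd hG0 t 0
  simp at hc
  have := congrArg (· * Real.exp (k*t)) hc
  simp only [mul_assoc, ← Real.exp_add] at this
  simpa using this

/-- Determining equations for (deterministic) symmetries of the Langevin
equation `dX = aX dt + b dW` (drift `f(t,x) = ax`, diffusion `g ≡ b`):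
`τ'·ax + a·φ = φ_t + φ_x·ax + (1/2)·φ_xx·b²` and `(1/2)·τ' = φ_x` hold for all
`(t,x)` iff `τ(t) = (c₂/a)·e^{2at} + c₃` and `φ(t,x) = c₁·e^{at} + c₂·e^{2at}·x`. -/
theorem langevin_deterministic_symmetries
    (a b : ℝ) (ha : a ≠ 0)
    (τ : ℝ → ℝ) (φ : ℝ → ℝ → ℝ)
    (hτ : ContDiff ℝ (⊤ : ℕ∞) τ) (hφ : ContDiff ℝ (⊤ : ℕ∞) (Function.uncurry φ)) :
    ((∀ t x : ℝ,
        deriv τ t * (a * x) + a * φ t x =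
          deriv (fun s => φ s x) t + deriv (φ t) x * (a * x) +
            (1 / 2) * deriv (deriv (φ t)) x * b ^ 2) ∧
     (∀ t x : ℝ, (1 / 2) * deriv τ t = deriv (φ t) x)) ↔
    (∃ c₁ c₂ c₃ : ℝ,
        (∀ t : ℝ, τ t = (c₂ / a) * Real.exp (2 * a * t) + c₃) ∧
        (∀ t x : ℝ, φ t x = c₁ * Real.exp (a * t) + c₂ * Real.exp (2 * a * t) * x)) := by
  constructor
  · rintro ⟨h1, h2⟩
    -- partial differentiability
    have hφt : ∀ t, Differentiable ℝ (φ t) := by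
      intro t
      have := (hφ.comp ((contDiff_const.prodMk contDiff_id) :
        ContDiff ℝ (⊤ : ℕ∞) fun x : ℝ => (t, x))).differentiable (by simp)
      exact this
    have hφx : ∀ x, Differentiable ℝ (fun s => φ s x) := by
      intro x
      have := (hφ.comp ((contDiff_id.prodMk contDiff_const) :
        ContDiff ℝ (⊤ : ℕ∞) fun s : ℝ => (s, x))).differentiable (by simp)
      exact this
    -- structure: φ t x = φ t 0 + (1/2) τ'(t) x
    have hstruct : ∀ t x, φ t x = φ t 0 + (1/2) * deriv τ t * x := by
      intro t x
      have hd : Differentiable ℝ (fun y => φ t y - (1/2) * deriv τ t * y) :=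
        (hφt t).sub (differentiable_id.const_mul _)
      have hz : ∀ y, deriv (fun y => φ t y - (1/2) * deriv τ t * y) y = 0 := by
        intro y
        have hlin : HasDerivAt (fun y : ℝ => (1/2) * deriv τ t * y) ((1/2) * deriv τ t) y := by
          simpa using (hasDerivAt_id y).const_mul ((1/2) * deriv τ t)
        rw [HasDerivAt.deriv (f := fun y => φ t y - (1/2) * deriv τ t * y) ((((hφt t) y).hasDerivAt).sub hlin), ← h2 t y]
        ring
      have := is_const_of_deriv_eq_zero hd hz x 0
      simp at this
      linarith
    set B : ℝ → ℝ := fun t => φ t 1 - φ t 0 with hBdef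
    have hB_eq : ∀ t, B t = (1/2) * deriv τ t := by
      intro t
      have := hstruct t 1
      simp [hBdef] at this ⊢
      linarith
    have hτ' : ∀ t, deriv τ t = 2 * B t := by intro t; rw [hB_eq]; ring
    have hφx' : ∀ t x, deriv (φ t) x = B t := by
      intro t x; rw [← h2 t x, hB_eq]
    have hφxx : ∀ t x, deriv (deriv (φ t)) x = 0 := by
      intro t x
      have : deriv (φ t) = fun _ => B t := funext (hφx' t)
      rw [this, deriv_const]
    -- A' = a A where A t = φ t 0
    have hA' : ∀ t, deriv (fun s => φ s 0) t = a * φ t 0 := by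
      intro t
      have := h1 t 0
      rw [hφxx t 0] at this
      simp at this
      linarith
    have hAsol : ∀ t, φ t 0 = φ 0 0 * Real.exp (a * t) :=
      ode_solve a (fun t => φ t 0) (hφx 0) hA'
    -- B' = 2a B
    have hBdiff : Differentiable ℝ B := (hφx 1).sub (hφx 0)
    have hB' : ∀ t, deriv B t = 2 * a * B t := by
      intro t
      have hder : deriv B t = deriv (fun s => φ s 1) t - deriv (fun s => φ s 0) t := by
        rw [hBdef]
        exact deriv_sub ((hφx 1) t) ((hφx 0) t)
      have h11 := h1 t 1
      rw [hφxx t 1, hφx' t 1, hτ' t] at h11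
      have hphi1 : φ t 1 = φ t 0 + B t := by simp [hBdef]
      rw [hphi1] at h11
      have hA := hA' t
      rw [hder, hA]
      linear_combination -h11
    have hBsol : ∀ t, B t = B 0 * Real.exp (2 * a * t) := by
      intro t
      have := ode_solve (2*a) B hBdiff hB' t
      simpa [mul_assoc] using this
    -- solve for τ
    have hτsol : ∀ t, τ t = (B 0 / a) * Real.exp (2 * a * t) + (τ 0 - B 0 / a) := by
      intro t
      have hH : ∀ s, HasDerivAt (fun s => τ s - (B 0 / a) * Real.exp (2*a*s))
          (deriv τ s - (B 0 / a) * ((2*a) * Real.exp ((2*a)*s))) s := by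
        intro s
        exact ((hτ.differentiable (by simp) s).hasDerivAt).sub ((expDeriv (2*a) s).const_mul _)
      have hHd : Differentiable ℝ (fun s => τ s - (B 0 / a) * Real.exp (2*a*s)) :=
        fun s => (hH s).differentiableAt
      have hH0 : ∀ s, deriv (fun s => τ s - (B 0 / a) * Real.exp (2*a*s)) s = 0 := by
        intro s
        rw [(hH s).deriv, hτ' s, hBsol s]
        field_simp
        ring
      have hc := is_const_of_deriv_eq_zero hHd hH0 t 0
      simp at hc
      have : (2:ℝ)*a*t = 2*a*t := rfl
      linarith [hc]
    refine ⟨φ 0 0, B 0, τ 0 - B 0 / a, hτsol, ?_⟩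
    intro t x
    rw [hstruct t x, hAsol t, ← hB_eq t, hBsol t]
  · rintro ⟨c₁, c₂, c₃, hτeq, hφeq⟩
    have hτf : τ = fun t => (c₂ / a) * Real.exp (2 * a * t) + c₃ := funext hτeq
    have hφf : φ = fun t x => c₁ * Real.exp (a * t) + c₂ * Real.exp (2 * a * t) * x :=
      funext fun t => funext fun x => hφeq t x
    subst hτf hφf
    have hdτ : ∀ t : ℝ, deriv (fun t => (c₂ / a) * Real.exp (2 * a * t) + c₃) t
        = (c₂ / a) * (2 * a * Real.exp (2 * a * t)) := by
      intro t
      exact (((expDeriv (2*a) t).const_mul (c₂/a)).add_const c₃).deriv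
    have hdt : ∀ t x : ℝ, deriv (fun s => c₁ * Real.exp (a * s) + c₂ * Real.exp (2 * a * s) * x) t
        = c₁ * (a * Real.exp (a * t)) + c₂ * (2 * a * Real.exp (2 * a * t)) * x := by
      intro t x
      exact (((expDeriv a t).const_mul c₁).add (((expDeriv (2*a) t).const_mul c₂).mul_const x)).deriv
    have hdx : ∀ t x : ℝ, deriv (fun y => c₁ * Real.exp (a * t) + c₂ * Real.exp (2 * a * t) * y) x
        = c₂ * Real.exp (2 * a * t) := by
      intro t x
      have : HasDerivAt (fun y : ℝ => c₁ * Real.exp (a * t) + c₂ * Real.exp (2 * a * t) * y)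
          (0 + c₂ * Real.exp (2 * a * t) * 1) x :=
        (hasDerivAt_const x _).add ((hasDerivAt_id x).const_mul _)
      simpa using this.deriv
    have hdxx : ∀ t x : ℝ,
        deriv (deriv (fun y => c₁ * Real.exp (a * t) + c₂ * Real.exp (2 * a * t) * y)) x = 0 := by
      intro t x
      have : deriv (fun y : ℝ => c₁ * Real.exp (a * t) + c₂ * Real.exp (2 * a * t) * y)
          = fun _ => c₂ * Real.exp (2 * a * t) := funext (hdx t)
      rw [this, deriv_const]
    constructor
    · intro t x
      rw [hdτ t, hdt t x, hdx t x, hdxx t x]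
      field_simp
      ring
    · intro t x
      rw [hdτ t, hdx t x]
      field_simp
end

section
/- Let a, b be real numbers with a ≠ 0 and b ≠ 0, and let τ : ℝ → ℝ and φ, φ̃ : ℝ × ℝ → ℝ be smooth functions. Then (τ, φ, φ̃) satisfies the stochastic determining equations for the Langevin equation dX(t) = aX(t)dt + b dW(t) (drift f(t,x) = ax, diffusion g ≡ b), namely: τ'(t)·ax + a·φ = ∂φ/∂t + (∂φ/∂x)·ax + (1/2)·(∂²φ/∂x²)·b²; a·φ̃ = ∂φ̃/∂t + (∂φ̃/∂x)·ax + (1/2)·(∂²φ̃/∂x²)·b²; (1/2)·τ'(t)·b = (∂φ/∂x)·b; and 0 = (∂φ̃/∂x)·b, for all (t,x), if and only if there exist real constants c₁, c₂, c₃, c₄ such that τ(t) = (c₂/a)·e^{2at} + c₃, φ(t,x) = c₁·e^{at} + c₂·e^{2at}·x, and φ̃(t,x) = c₄·e^{at}. In particular the stochastic symmetries are spanned by the three deterministic generators e^{at} ∂/∂x, (e^{2at}/a) ∂/∂t + e^{2at} x ∂/∂x, ∂/∂t, together with the purely stochastic generator [e^{at} ∂/∂x]^S. -/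
lemma solve_exp (k : ℝ) (u : ℝ → ℝ) (hu : Differentiable ℝ u)
    (h : ∀ t, deriv u t = k * u t) : ∀ t, u t = u 0 * Real.exp (k * t) := by
  have hg : ∀ t, HasDerivAt (fun s => u s * Real.exp (-k * s)) 0 t := by
    intro t
    have h1 : HasDerivAt (fun s => Real.exp (-k * s)) (Real.exp (-k * t) * (-k)) t := by
      simpa using ((hasDerivAt_id t).const_mul (-k)).exp
    have h2 := ((hu t).hasDerivAt.mul h1)
    have : deriv u t * Real.exp (-k * t) + u t * (Real.exp (-k * t) * (-k)) = 0 := by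
      rw [h t]; ring
    rwa [this] at h2
  have hc : ∀ t, u t * Real.exp (-k * t) = u 0 * Real.exp (-k * 0) :=
    fun t => is_const_of_deriv_eq_zero
      (fun s => (hg s).differentiableAt) (fun s => (hg s).deriv) t 0
  intro t
  have h0 := hc t
  simp only [mul_zero, Real.exp_zero, mul_one] at h0
  have h3 : u t * Real.exp (-k * t) * Real.exp (k * t) = u 0 * Real.exp (k * t) := by
    rw [h0]
  rwa [mul_assoc, ← Real.exp_add, neg_mul, neg_add_cancel, Real.exp_zero, mul_one] at h3

lemma solve_affine (f : ℝ → ℝ) (c : ℝ) (hf : Differentiable ℝ f)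
    (h : ∀ x, deriv f x = c) : ∀ x, f x = f 0 + c * x := by
  have hg : ∀ x, HasDerivAt (fun y => f y - c * y) 0 x := by
    intro x
    have h2 := (hf x).hasDerivAt.sub ((hasDerivAt_id x).const_mul c)
    have he : deriv f x - c * 1 = 0 := by rw [h x]; ring
    rwa [he] at h2
  have hc : ∀ x, f x - c * x = f 0 - c * 0 :=
    fun x => is_const_of_deriv_eq_zero
      (fun s => (hg s).differentiableAt) (fun s => (hg s).deriv) x 0
  intro x
  have h0 := hc x
  rw [mul_zero, sub_zero] at h0
  linarith




/-- Stochastic determining equations for the Langevin equation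
`dX = aX dt + b dW` (drift `f(t,x) = ax`, diffusion `g ≡ b`, with `a ≠ 0`,
`b ≠ 0`): the four determining equations hold for all `(t,x)` iff
`τ(t) = (c₂/a)·e^{2at} + c₃`, `φ(t,x) = c₁·e^{at} + c₂·e^{2at}·x`, and
`φ̃(t,x) = c₄·e^{at}`. -/
theorem langevin_stochastic_symmetries
    (a b : ℝ) (ha : a ≠ 0) (hb : b ≠ 0)
    (τ : ℝ → ℝ) (φ φt : ℝ → ℝ → ℝ)
    (hτ : ContDiff ℝ (⊤ : ℕ∞) τ) (hφ : ContDiff ℝ (⊤ : ℕ∞) (Function.uncurry φ))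
    (hφt : ContDiff ℝ (⊤ : ℕ∞) (Function.uncurry φt)) :
    ((∀ t x : ℝ,
        deriv τ t * (a * x) + a * φ t x =
          deriv (fun s => φ s x) t + deriv (φ t) x * (a * x) +
            (1 / 2) * deriv (deriv (φ t)) x * b ^ 2) ∧
     (∀ t x : ℝ,
        a * φt t x =
          deriv (fun s => φt s x) t + deriv (φt t) x * (a * x) +
            (1 / 2) * deriv (deriv (φt t)) x * b ^ 2) ∧
     (∀ t x : ℝ, (1 / 2) * deriv τ t * b = deriv (φ t) x * b) ∧
     (∀ t x : ℝ, (0 : ℝ) = deriv (φt t) x * b)) ↔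
    (∃ c₁ c₂ c₃ c₄ : ℝ,
        (∀ t : ℝ, τ t = (c₂ / a) * Real.exp (2 * a * t) + c₃) ∧
        (∀ t x : ℝ, φ t x = c₁ * Real.exp (a * t) + c₂ * Real.exp (2 * a * t) * x) ∧
        (∀ t x : ℝ, φt t x = c₄ * Real.exp (a * t))) := by
  -- basic differentiability facts
  have hφx : ∀ t, Differentiable ℝ (φ t) := fun t =>
    (hφ.differentiable (by simp)).comp ((differentiable_const t).prodMk differentiable_id)
  have hφtx : ∀ t, Differentiable ℝ (φt t) := fun t =>
    (hφt.differentiable (by simp)).comp ((differentiable_const t).prodMk differentiable_id)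
  have hφs : ∀ x, Differentiable ℝ (fun s => φ s x) := fun x =>
    (hφ.differentiable (by simp)).comp (differentiable_id.prodMk (differentiable_const x))
  have hφts : ∀ x, Differentiable ℝ (fun s => φt s x) := fun x =>
    (hφt.differentiable (by simp)).comp (differentiable_id.prodMk (differentiable_const x))
  have hτ' : Differentiable ℝ (deriv τ) :=
    ((contDiff_infty_iff_deriv.mp (hτ.of_le (by simp))).2).differentiable (by simp)
  constructor
  · rintro ⟨e1, e2, e3, e4⟩
    -- φt : derivative in x vanishes
    have hd4 : ∀ t x, deriv (φt t) x = 0 := by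
      intro t x
      have := (e4 t x).symm
      exact (mul_eq_zero.mp this).resolve_right hb
    have hct : ∀ t x, φt t x = φt t 0 := fun t x =>
      is_const_of_deriv_eq_zero (hφtx t) (hd4 t) x 0
    have hdd4 : ∀ t, deriv (φt t) = fun _ => (0 : ℝ) := fun t => funext (hd4 t)
    have hu : ∀ t, deriv (fun s => φt s 0) t = a * φt t 0 := by
      intro t
      have h2 := e2 t 0
      rw [hdd4 t] at h2
      simp at h2
      linarith
    have hsol4 := solve_exp a (fun s => φt s 0) (hφts 0) hu
    -- φ : derivative in x is q t := deriv τ t / 2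
    set q : ℝ → ℝ := fun t => deriv τ t / 2 with hq_def
    have hd3 : ∀ t x, deriv (φ t) x = q t := by
      intro t x
      have := e3 t x
      have h2 : (1 / 2) * deriv τ t = deriv (φ t) x := mul_right_cancel₀ hb this
      rw [← h2]; simp [hq_def]; ring
    have haff : ∀ t x, φ t x = φ t 0 + q t * x := fun t =>
      solve_affine (φ t) (q t) (hφx t) (hd3 t)
    have hdd3 : ∀ t, deriv (φ t) = fun _ => q t := fun t => funext (hd3 t)
    have hq : Differentiable ℝ q := hτ'.div_const 2
    have hp : Differentiable ℝ (fun s => φ s 0) := hφs 0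
    have hts : ∀ t x, deriv (fun s => φ s x) t = deriv (fun s => φ s 0) t + deriv q t * x := by
      intro t x
      have hfe : (fun s => φ s x) = fun s => φ s 0 + q s * x := funext fun s => haff s x
      rw [hfe]
      exact ((hp t).hasDerivAt.add ((hq t).hasDerivAt.mul_const x)).deriv
    have E1 : ∀ t x, deriv τ t * (a * x) + a * (φ t 0 + q t * x) =
        (deriv (fun s => φ s 0) t + deriv q t * x) + q t * (a * x) := by
      intro t x
      have h1 := e1 t x
      rw [hts t x, hd3 t x, hdd3 t] at h1
      simp only [deriv_const] at h1
      rw [haff t x] at h1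
      linarith
    have hP : ∀ t, deriv (fun s => φ s 0) t = a * φ t 0 := by
      intro t
      have := E1 t 0
      simp at this
      linarith
    have hQ : ∀ t, deriv q t = (2 * a) * q t := by
      intro t
      have h1 := E1 t 1
      have h0 := E1 t 0
      have hτq : deriv τ t = 2 * q t := by simp [hq_def]; ring
      rw [hτq] at h1
      simp at h1 h0
      linarith
    have hsolp := solve_exp a (fun s => φ s 0) hp hP
    have hsolq := solve_exp (2 * a) q hq hQ
    refine ⟨φ 0 0, q 0, τ 0 - q 0 / a, φt 0 0, ?_, ?_, ?_⟩
    · -- τ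
      intro t
      have hF : ∀ s, HasDerivAt
          (fun r => τ r - (q 0 / a) * Real.exp (2 * a * r)) 0 s := by
        intro s
        have hE : HasDerivAt (fun r => Real.exp (2 * a * r))
            (Real.exp (2 * a * s) * (2 * a)) s := by
          simpa using ((hasDerivAt_id s).const_mul (2 * a)).exp
        have h2 := ((hτ.differentiable (by simp)) s).hasDerivAt.sub (hE.const_mul (q 0 / a))
        have hv : deriv τ s - q 0 / a * (Real.exp (2 * a * s) * (2 * a)) = 0 := by
          have h3 : deriv τ s = 2 * q s := by simp [hq_def]; ring
          rw [h3, hsolq s]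
          field_simp
          ring
        rwa [hv] at h2
      have hc := is_const_of_deriv_eq_zero (fun s => (hF s).differentiableAt)
        (fun s => (hF s).deriv) t 0
      simp only [mul_zero, Real.exp_zero, mul_one] at hc
      linarith
    · -- φ
      intro t x
      have hpt := hsolp t
      rw [haff t x, hpt, hsolq t]
    · -- φt
      intro t x
      have h4t := hsol4 t
      rw [hct t x, h4t]
  · rintro ⟨c₁, c₂, c₃, c₄, h1, h2, h3⟩
    have hτe : τ = fun t => (c₂ / a) * Real.exp (2 * a * t) + c₃ := funext h1
    have hE : ∀ t : ℝ, HasDerivAt (fun s => Real.exp (2 * a * s))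
        (Real.exp (2 * a * t) * (2 * a)) t := fun t => by
      simpa using ((hasDerivAt_id t).const_mul (2 * a)).exp
    have he : ∀ t : ℝ, HasDerivAt (fun s => Real.exp (a * s))
        (Real.exp (a * t) * a) t := fun t => by
      simpa using ((hasDerivAt_id t).const_mul a).exp
    have dτ : ∀ t, deriv τ t = 2 * c₂ * Real.exp (2 * a * t) := by
      intro t
      rw [hτe]
      have := (((hE t).const_mul (c₂ / a)).add_const c₃).deriv
      rw [this]
      field_simp
    have dφx : ∀ t x, deriv (φ t) x = c₂ * Real.exp (2 * a * t) := by
      intro t x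
      have hfe : φ t = fun y => c₁ * Real.exp (a * t) + c₂ * Real.exp (2 * a * t) * y :=
        funext (h2 t)
      rw [hfe]
      have := (((hasDerivAt_id x).const_mul (c₂ * Real.exp (2 * a * t))).const_add
        (c₁ * Real.exp (a * t))).deriv
      simpa using this
    have ddφx : ∀ t x, deriv (deriv (φ t)) x = 0 := by
      intro t x
      have : deriv (φ t) = fun _ => c₂ * Real.exp (2 * a * t) := funext (dφx t)
      rw [this]
      simp
    have dφs : ∀ t x, deriv (fun s => φ s x) t =
        c₁ * (Real.exp (a * t) * a) + c₂ * (Real.exp (2 * a * t) * (2 * a)) * x := by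
      intro t x
      have hfe : (fun s => φ s x) =
          fun s => c₁ * Real.exp (a * s) + c₂ * Real.exp (2 * a * s) * x :=
        funext fun s => h2 s x
      rw [hfe]
      exact (((he t).const_mul c₁).add (((hE t).const_mul c₂).mul_const x)).deriv
    have dφtx : ∀ t x, deriv (φt t) x = 0 := by
      intro t x
      have hfe : φt t = fun _ => c₄ * Real.exp (a * t) := funext (h3 t)
      rw [hfe]
      simp
    have ddφtx : ∀ t x, deriv (deriv (φt t)) x = 0 := by
      intro t x
      have : deriv (φt t) = fun _ => (0 : ℝ) := funext (dφtx t)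
      rw [this]
      simp
    have dφts : ∀ t x, deriv (fun s => φt s x) t = c₄ * (Real.exp (a * t) * a) := by
      intro t x
      have hfe : (fun s => φt s x) = fun s => c₄ * Real.exp (a * s) :=
        funext fun s => h3 s x
      rw [hfe]
      exact ((he t).const_mul c₄).deriv
    refine ⟨?_, ?_, ?_, ?_⟩
    · intro t x
      rw [dτ, dφx, ddφx, dφs, h2]
      ring
    · intro t x
      rw [dφtx, ddφtx, dφts, h3]
      ring
    · intro t x
      rw [dτ, dφx]
      ring
    · intro t x
      rw [dφtx]
      ring
end

section
/- Let a be a nonzero real number, and let τ : ℝ → ℝ and φ, φ̃ : ℝ × (0,∞) → ℝ be smooth functions. Then (τ, φ, φ̃) satisfies the stochastic determining equations for the SDE dX(t) = (a/X(t))dt + dW(t) on the domain x > 0 (drift f(t,x) = a/x, diffusion g ≡ 1), namely: τ'(t)·(a/x) − (a/x²)·φ + (1/2)·(2a/x³)·φ̃² = ∂φ/∂t + (∂φ/∂x)·(a/x) + (1/2)·∂²φ/∂x²; −(a/x²)·φ̃ = ∂φ̃/∂t + (∂φ̃/∂x)·(a/x) + (1/2)·∂²φ̃/∂x²; (1/2)·τ'(t)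 = ∂φ/∂x; and 0 = ∂φ̃/∂x, for all t ∈ ℝ and x > 0, if and only if there exist real constants c₁, c₂ such that τ(t) = 2c₁t + c₂, φ(t,x) = c₁x, and φ̃ ≡ 0. In particular, for this equation the stochastic symmetries coincide with the deterministic symmetries: no symmetry with nonzero stochastic part exists. -/
open Set Filter

private lemma constIoi {f : ℝ → ℝ}
    (hd : ∀ y ∈ Set.Ioi (0:ℝ), DifferentiableAt ℝ f y)
    (h0 : ∀ y ∈ Set.Ioi (0:ℝ), deriv f y = 0)
    {x y : ℝ} (hx : 0 < x) (hy : 0 < y) : f x = f y := by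
  have h := (convex_Ioi (0:ℝ)).norm_image_sub_le_of_norm_deriv_le (C := 0) hd
    (fun z hz => by simp [h0 z hz]) hy hx
  have h2 : f x - f y = 0 := by
    rw [← norm_le_zero_iff]
    simpa using h
  linarith

private lemma diffAt_x {φ : ℝ → ℝ → ℝ}
    (hφ : ContDiffOn ℝ (⊤ : ℕ∞) (Function.uncurry φ) (Set.univ ×ˢ Set.Ioi (0:ℝ)))
    (t : ℝ) {x : ℝ} (hx : 0 < x) : DifferentiableAt ℝ (φ t) x := by
  have hopen : IsOpen ((Set.univ : Set ℝ) ×ˢ Set.Ioi (0:ℝ)) := isOpen_univ.prod isOpen_Ioi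
  have h1 : ContDiffAt ℝ (⊤ : ℕ∞) (Function.uncurry φ) (t, x) :=
    hφ.contDiffAt (hopen.mem_nhds ⟨trivial, hx⟩)
  have h2 : ContDiffAt ℝ (⊤ : ℕ∞) (fun y : ℝ => ((t, y) : ℝ × ℝ)) x :=
    ContDiffAt.prodMk contDiffAt_const contDiffAt_id
  exact (h1.comp x h2).differentiableAt (by simp)

private lemma diffAt_t {φ : ℝ → ℝ → ℝ}
    (hφ : ContDiffOn ℝ (⊤ : ℕ∞) (Function.uncurry φ) (Set.univ ×ˢ Set.Ioi (0:ℝ)))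
    {x : ℝ} (hx : 0 < x) (t : ℝ) : DifferentiableAt ℝ (fun s => φ s x) t := by
  have hopen : IsOpen ((Set.univ : Set ℝ) ×ˢ Set.Ioi (0:ℝ)) := isOpen_univ.prod isOpen_Ioi
  have h1 : ContDiffAt ℝ (⊤ : ℕ∞) (Function.uncurry φ) (t, x) :=
    hφ.contDiffAt (hopen.mem_nhds ⟨trivial, hx⟩)
  have h2 : ContDiffAt ℝ (⊤ : ℕ∞) (fun s : ℝ => ((s, x) : ℝ × ℝ)) t :=
    ContDiffAt.prodMk contDiffAt_id contDiffAt_const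
  exact (h1.comp t h2).differentiableAt (by simp)

/-- Stochastic determining equations for the SDE `dX = (a/X) dt + dW` on the
domain `x > 0` (drift `f(t,x) = a/x`, diffusion `g ≡ 1`, `a ≠ 0`): the four
determining equations hold for all `t ∈ ℝ`, `x > 0`, iff `τ(t) = 2c₁t + c₂`,
`φ(t,x) = c₁x` and `φ̃ ≡ 0`.  In particular no symmetry with nonzero
stochastic part exists. -/
theorem bessel_type_stochastic_symmetries
    (a : ℝ) (ha : a ≠ 0)
    (τ : ℝ → ℝ) (φ φt : ℝ → ℝ → ℝ)
    (hτ : ContDiff ℝ (⊤ : ℕ∞) τ)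
    (hφ : ContDiffOn ℝ (⊤ : ℕ∞) (Function.uncurry φ) (Set.univ ×ˢ Set.Ioi (0 : ℝ)))
    (hφt : ContDiffOn ℝ (⊤ : ℕ∞) (Function.uncurry φt) (Set.univ ×ˢ Set.Ioi (0 : ℝ))) :
    ((∀ t : ℝ, ∀ x > (0 : ℝ),
        deriv τ t * (a / x) - (a / x ^ 2) * φ t x +
            (1 / 2) * (2 * a / x ^ 3) * (φt t x) ^ 2 =
          deriv (fun s => φ s x) t + deriv (φ t) x * (a / x) +
            (1 / 2) * deriv (deriv (φ t)) x) ∧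
     (∀ t : ℝ, ∀ x > (0 : ℝ),
        -(a / x ^ 2) * φt t x =
          deriv (fun s => φt s x) t + deriv (φt t) x * (a / x) +
            (1 / 2) * deriv (deriv (φt t)) x) ∧
     (∀ t : ℝ, ∀ x > (0 : ℝ), (1 / 2) * deriv τ t = deriv (φ t) x) ∧
     (∀ t : ℝ, ∀ x > (0 : ℝ), deriv (φt t) x = 0)) ↔
    (∃ c₁ c₂ : ℝ,
        (∀ t : ℝ, τ t = 2 * c₁ * t + c₂) ∧
        (∀ t : ℝ, ∀ x > (0 : ℝ), φ t x = c₁ * x) ∧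
        (∀ t : ℝ, ∀ x > (0 : ℝ), φt t x = 0)) := by
  constructor
  · rintro ⟨e1, e2, e3, e4⟩
    -- φt is constant in x
    have hφtc : ∀ t : ℝ, ∀ x > (0:ℝ), ∀ y > (0:ℝ), φt t x = φt t y := fun t x hx y hy =>
      constIoi (fun z hz => diffAt_x hφt t hz) (fun z hz => e4 t z hz) hx hy
    -- second x-derivative of φt vanishes
    have hd2φt : ∀ t : ℝ, ∀ x > (0:ℝ), deriv (deriv (φt t)) x = 0 := by
      intro t x hx
      have hev : deriv (φt t) =ᶠ[nhds x] fun _ => (0:ℝ) :=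
        eventually_of_mem (Ioi_mem_nhds hx) (fun z hz => e4 t z hz)
      rw [hev.deriv_eq, deriv_const]
    -- φt vanishes
    have hφt0 : ∀ t : ℝ, ∀ x > (0:ℝ), φt t x = 0 := by
      intro t x hx
      have h1 := e2 t 1 one_pos
      have h2 := e2 t 2 two_pos
      rw [e4 t 1 one_pos, hd2φt t 1 one_pos] at h1
      rw [e4 t 2 two_pos, hd2φt t 2 two_pos] at h2
      have hfun : (fun s => φt s 2) = fun s => φt s 1 :=
        funext fun s => hφtc s 2 two_pos 1 one_pos
      rw [hfun, hφtc t 2 two_pos 1 one_pos] at h2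
      have h3 : -(a / 1 ^ 2) * φt t 1 = -(a / 2 ^ 2) * φt t 1 := by
        rw [h1, h2]; ring
      have h4 : a * φt t 1 = 0 := by nlinarith [h3]
      have h5 : φt t 1 = 0 := by
        rcases mul_eq_zero.mp h4 with h | h
        · exact absurd h ha
        · exact h
      rw [hφtc t x hx 1 one_pos, h5]
    -- φ is linear in x: φ t x = φ t 1 + (1/2 * deriv τ t) * (x - 1)
    have hφlin : ∀ t : ℝ, ∀ x > (0:ℝ),
        φ t x = φ t 1 + 1 / 2 * deriv τ t * (x - 1) := by
      intro t x hx
      have hc := constIoi (f := fun y => φ t y - 1 / 2 * deriv τ t * y)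
        (fun z hz => (diffAt_x hφ t hz).sub (differentiableAt_id.const_mul _))
        (fun z hz => by
          have hdz : HasDerivAt (fun y : ℝ => 1 / 2 * deriv τ t * y)
              (1 / 2 * deriv τ t) z := by
            simpa using (hasDerivAt_id z).const_mul (1 / 2 * deriv τ t)
          rw [deriv_fun_sub (diffAt_x hφ t hz) hdz.differentiableAt, hdz.deriv,
            ← e3 t z hz]
          ring) hx one_pos
      have := hc
      linarith [this]
    -- second x-derivative of φ vanishes
    have hd2φ : ∀ t : ℝ, ∀ x > (0:ℝ), deriv (deriv (φ t)) x = 0 := by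
      intro t x hx
      have hev : deriv (φ t) =ᶠ[nhds x] fun _ => 1 / 2 * deriv τ t :=
        eventually_of_mem (Ioi_mem_nhds hx) (fun z hz => (e3 t z hz).symm)
      rw [hev.deriv_eq, deriv_const]
    -- derivative of τ' is smooth
    have hLτ : ContDiff ℝ ((⊤ : ℕ∞) : WithTop ℕ∞) τ := hτ.of_le (by simp)
    have hτ1 : ContDiff ℝ ((⊤ : ℕ∞) : WithTop ℕ∞) (deriv τ) := (contDiff_infty_iff_deriv.mp hLτ).2
    have hτ2d : ∀ t : ℝ, DifferentiableAt ℝ (deriv τ) t :=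
      fun t => (hτ1.differentiable (by simp)) t
    -- t-derivative of φ(·, x)
    have hderiv_t : ∀ t : ℝ, ∀ x > (0:ℝ),
        deriv (fun s => φ s x) t =
          deriv (fun s => φ s 1) t + 1 / 2 * deriv (deriv τ) t * (x - 1) := by
      intro t x hx
      have hfeq : (fun s => φ s x) = fun s => φ s 1 + 1 / 2 * deriv τ s * (x - 1) :=
        funext fun s => hφlin s x hx
      rw [hfeq]
      have h1 : HasDerivAt (fun s => φ s 1) (deriv (fun s => φ s 1) t) t :=
        (diffAt_t hφ one_pos t).hasDerivAt
      have h2 : HasDerivAt (fun s => 1 / 2 * deriv τ s * (x - 1))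
          (1 / 2 * deriv (deriv τ) t * (x - 1)) t :=
        (((hτ2d t).hasDerivAt.const_mul (1 / 2)).mul_const (x - 1))
      exact (h1.add h2).deriv
    -- the key reduced equation
    have key : ∀ t : ℝ, ∀ x > (0:ℝ),
        deriv τ t * (a / x) - (a / x ^ 2) * (φ t 1 + 1 / 2 * deriv τ t * (x - 1)) =
          (deriv (fun s => φ s 1) t + 1 / 2 * deriv (deriv τ) t * (x - 1)) +
            1 / 2 * deriv τ t * (a / x) := by
      intro t x hx
      have h := e1 t x hx
      rw [hφt0 t x hx, hφlin t x hx, hd2φ t x hx, hderiv_t t x hx, ← e3 t x hx] at h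
      have : (1:ℝ) / 2 * (2 * a / x ^ 3) * 0 ^ 2 = 0 := by ring
      nlinarith [h]
    -- evaluate at x = 1, 2, 4 and solve
    have hBQ : ∀ t : ℝ, deriv τ t = 2 * φ t 1 ∧ deriv (deriv τ) t = 0 := by
      intro t
      have k1 := key t 1 one_pos
      have k2 := key t 2 two_pos
      have k4 := key t 4 (by norm_num)
      set A := deriv τ t
      set B := φ t 1
      set P := deriv (fun s => φ s 1) t
      set Q := deriv (deriv τ) t
      norm_num at k1 k2 k4
      constructor
      · have haK : a * (A - 2 * B) = 0 := by nlinarith [k1, k2, k4]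
        rcases mul_eq_zero.mp haK with h | h
        · exact absurd h ha
        · linarith
      · nlinarith [k1, k2, k4]
    -- τ' is constant
    have hQ0 : ∀ t : ℝ, deriv (deriv τ) t = 0 := fun t => (hBQ t).2
    have hAconst : ∀ t : ℝ, deriv τ t = deriv τ 0 :=
      fun t => is_const_of_deriv_eq_zero (hτ1.differentiable (by simp)) hQ0 t 0
    refine ⟨deriv τ 0 / 2, τ 0, ?_, ?_, fun t x hx => hφt0 t x hx⟩
    · intro t
      have hg : Differentiable ℝ (fun t => τ t - 2 * (deriv τ 0 / 2) * t) :=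
        (hτ.differentiable (by simp)).sub (differentiable_id.const_mul _)
      have hg' : ∀ t : ℝ, deriv (fun t => τ t - 2 * (deriv τ 0 / 2) * t) t = 0 := by
        intro s
        have hds : HasDerivAt (fun t : ℝ => 2 * (deriv τ 0 / 2) * t)
            (2 * (deriv τ 0 / 2)) s := by
          simpa using (hasDerivAt_id s).const_mul (2 * (deriv τ 0 / 2))
        rw [deriv_fun_sub ((hτ.differentiable (by simp)).differentiableAt)
          hds.differentiableAt, hds.deriv, hAconst s]
        ring
      have := is_const_of_deriv_eq_zero hg hg' t 0
      linarith [this]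
    · intro t x hx
      have hB := (hBQ t).1
      have hlin := hφlin t x hx
      rw [hAconst t] at hB hlin
      rw [hlin]
      have : φ t 1 = deriv τ 0 / 2 := by linarith
      rw [this]
      ring
  · rintro ⟨c₁, c₂, h1, h2, h3⟩
    have hτeq : τ = fun t => 2 * c₁ * t + c₂ := funext h1
    have hdτ : ∀ t : ℝ, deriv τ t = 2 * c₁ := by
      intro t
      rw [hτeq]
      have : HasDerivAt (fun t : ℝ => 2 * c₁ * t + c₂) (2 * c₁) t := by
        simpa using ((hasDerivAt_id t).const_mul (2 * c₁)).add_const c₂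
      exact this.deriv
    have hdφx : ∀ t : ℝ, ∀ x > (0:ℝ), deriv (φ t) x = c₁ := by
      intro t x hx
      have hev : φ t =ᶠ[nhds x] fun y => c₁ * y :=
        eventually_of_mem (Ioi_mem_nhds hx) (fun z hz => h2 t z hz)
      rw [hev.deriv_eq]
      simpa using ((hasDerivAt_id x).const_mul c₁).deriv
    have hddφ : ∀ t : ℝ, ∀ x > (0:ℝ), deriv (deriv (φ t)) x = 0 := by
      intro t x hx
      have hev : deriv (φ t) =ᶠ[nhds x] fun _ => c₁ :=
        eventually_of_mem (Ioi_mem_nhds hx) (fun z hz => hdφx t z hz)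
      rw [hev.deriv_eq, deriv_const]
    have hdφt' : ∀ t : ℝ, ∀ x > (0:ℝ), deriv (φt t) x = 0 := by
      intro t x hx
      have hev : φt t =ᶠ[nhds x] fun _ => (0:ℝ) :=
        eventually_of_mem (Ioi_mem_nhds hx) (fun z hz => h3 t z hz)
      rw [hev.deriv_eq, deriv_const]
    have hddφt : ∀ t : ℝ, ∀ x > (0:ℝ), deriv (deriv (φt t)) x = 0 := by
      intro t x hx
      have hev : deriv (φt t) =ᶠ[nhds x] fun _ => (0:ℝ) :=
        eventually_of_mem (Ioi_mem_nhds hx) (fun z hz => hdφt' t z hz)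
      rw [hev.deriv_eq, deriv_const]
    have hdtφ : ∀ t : ℝ, ∀ x > (0:ℝ), deriv (fun s => φ s x) t = 0 := by
      intro t x hx
      have : (fun s => φ s x) = fun _ => c₁ * x := funext fun s => h2 s x hx
      rw [this, deriv_const]
    have hdtφt : ∀ t : ℝ, ∀ x > (0:ℝ), deriv (fun s => φt s x) t = 0 := by
      intro t x hx
      have : (fun s => φt s x) = fun _ => (0:ℝ) := funext fun s => h3 s x hx
      rw [this, deriv_const]
    refine ⟨?_, ?_, ?_, ?_⟩
    · intro t x hx
      rw [hdτ t, h2 t x hx, h3 t x hx, hdφx t x hx, hddφ t x hx, hdtφ t x hx]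
      have hx' : x ≠ 0 := ne_of_gt hx
      field_simp
      ring
    · intro t x hx
      rw [h3 t x hx, hdφt' t x hx, hddφt t x hx, hdtφt t x hx]
      ring
    · intro t x hx
      rw [hdτ t, hdφx t x hx]
      ring
    · intro t x hx
      exact hdφt' t x hx
end

section
/- Let α ≠ 0 and β be real numbers, and let τ : ℝ → ℝ and φ : ℝ × ℝ → ℝ be smooth functions. Then (τ, φ) satisfies the determining equations for (deterministic) symmetries of the SDE dX(t) = (αX(t)+β)dt + dW(t) (drift f(t,x) = αx+β, diffusion g ≡ 1), namely τ'(t)·(αx+β) + α·φ = ∂φ/∂t + (∂φ/∂x)·(αx+β) + (1/2)·∂²φ/∂x² and (1/2)·τ'(t) = ∂φ/∂x for all (t,x), if and only if there exist real constants c₁, c₂, c₃ such that τ(t) = c₂·e^{2αt} + c₃ and φ(t,x) = c₁·e^{αt} + c₂·(αx+β)·e^{2αt}. (Equivalently, the symmetry algebra is spanned by X₁ = ∂/∂t, X₂ = e^{2αt} ∂/∂t + (αx+β)e^{2αt} ∂/∂x, X₃ = e^{αt} ∂/∂x.) -/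
lemma ode_exp (a : ℝ) (f : ℝ → ℝ) (hf : Differentiable ℝ f)
    (h : ∀ t, deriv f t = a * f t) : ∀ t, f t = f 0 * Real.exp (a * t) := by
  intro t
  have key : ∀ s : ℝ, f s * Real.exp (-(a * s)) = f 0 * Real.exp (-(a * 0)) := by
    intro s
    apply is_const_of_deriv_eq_zero (f := fun s => f s * Real.exp (-(a * s)))
    · exact hf.mul (((differentiable_id.const_mul a).neg).exp)
    · intro x
      have h1 : HasDerivAt (fun s => Real.exp (-(a * s))) (Real.exp (-(a * x)) * (-a)) x := by
        have : HasDerivAt (fun s : ℝ => -(a * s)) (-a) x := by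
          simpa using (hasDerivAt_id x).const_mul (-a)
        exact this.exp
      have h2 : HasDerivAt f (a * f x) x := by
        have := (hf x).hasDerivAt
        rwa [h x] at this
      have := (h2.mul h1).deriv
      rw [show (fun s => f s * Real.exp (-(a * s))) = (f * fun s => Real.exp (-(a * s))) from rfl, this]; ring
  have := key t
  simp only [mul_zero, neg_zero, Real.exp_zero, mul_one] at this
  have h3 := congrArg (· * Real.exp (a * t)) this
  simpa [mul_assoc, ← Real.exp_add] using h3

lemma linear_of_deriv_const (f : ℝ → ℝ) (hf : Differentiable ℝ f) (c : ℝ)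
    (h : ∀ x, deriv f x = c) : ∀ x, f x = f 0 + c * x := by
  intro x
  have key : ∀ s : ℝ, f s - c * s = f 0 - c * 0 := by
    intro s
    apply is_const_of_deriv_eq_zero (f := fun s => f s - c * s)
    · exact hf.sub (differentiable_id.const_mul c)
    · intro y
      have h2 : HasDerivAt (fun s => f s - c * s) (c - c) y := by
        have := (hf y).hasDerivAt
        rw [h y] at this
        exact this.sub (by simpa using (hasDerivAt_id y).const_mul c)
      simp [h2.deriv]
  have := key x
  linarith

lemma hexp_aux (c t : ℝ) :
    HasDerivAt (fun s => Real.exp (c * s)) (c * Real.exp (c * t)) t := by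
  have h : HasDerivAt (fun s : ℝ => c * s) c t := by
    simpa using (hasDerivAt_id t).const_mul c
  simpa [mul_comm] using h.exp

/-- Determining equations for (deterministic) symmetries of the SDE
`dX = (αX+β) dt + dW` (drift `f(t,x) = αx+β`, diffusion `g ≡ 1`, `α ≠ 0`):
`τ'·(αx+β) + α·φ = φ_t + φ_x·(αx+β) + (1/2)·φ_xx` and `(1/2)·τ' = φ_x` hold
for all `(t,x)` iff `τ(t) = c₂·e^{2αt} + c₃` and
`φ(t,x) = c₁·e^{αt} + c₂·(αx+β)·e^{2αt}`. -/
theorem affine_drift_deterministic_symmetries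
    (α β : ℝ) (hα : α ≠ 0)
    (τ : ℝ → ℝ) (φ : ℝ → ℝ → ℝ)
    (hτ : ContDiff ℝ (⊤ : ℕ∞) τ) (hφ : ContDiff ℝ (⊤ : ℕ∞) (Function.uncurry φ)) :
    ((∀ t x : ℝ,
        deriv τ t * (α * x + β) + α * φ t x =
          deriv (fun s => φ s x) t + deriv (φ t) x * (α * x + β) +
            (1 / 2) * deriv (deriv (φ t)) x) ∧
     (∀ t x : ℝ, (1 / 2) * deriv τ t = deriv (φ t) x)) ↔
    (∃ c₁ c₂ c₃ : ℝ,
        (∀ t : ℝ, τ t = c₂ * Real.exp (2 * α * t) + c₃) ∧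
        (∀ t x : ℝ,
          φ t x = c₁ * Real.exp (α * t) + c₂ * (α * x + β) * Real.exp (2 * α * t))) := by
  constructor
  · rintro ⟨h1, h2⟩
    -- smoothness facts
    have hτd : Differentiable ℝ τ := hτ.differentiable (by simp)
    have hu_smooth : ContDiff ℝ ((⊤ : ℕ∞) : WithTop ℕ∞) (deriv τ) :=
      (contDiff_infty_iff_deriv.mp (hτ.of_le (by simp))).2
    have hu_diff : Differentiable ℝ (deriv τ) :=
      hu_smooth.differentiable (by norm_num)
    have hφ1 : ∀ t, ContDiff ℝ (⊤ : ℕ∞) (φ t) := fun t =>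
      hφ.comp ((contDiff_const (c := t)).prodMk contDiff_id)
    have hφ2 : ∀ x, ContDiff ℝ (⊤ : ℕ∞) (fun s => φ s x) := fun x =>
      hφ.comp (contDiff_id.prodMk (contDiff_const (c := x)))
    have hp_diff : Differentiable ℝ (fun s => φ s 0) := (hφ2 0).differentiable (by simp)
    -- φ is linear in x
    have hdx : ∀ t x, deriv (φ t) x = (1 / 2) * deriv τ t := fun t x => (h2 t x).symm
    have hlin : ∀ t x, φ t x = φ t 0 + (1 / 2) * deriv τ t * x := fun t =>
      linear_of_deriv_const (φ t) ((hφ1 t).differentiable (by simp)) _ (hdx t)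
    have hdd : ∀ t x, deriv (deriv (φ t)) x = 0 := by
      intro t x
      have : deriv (φ t) = fun _ => (1 / 2) * deriv τ t := funext (hdx t)
      rw [this]; simp
    -- time derivative of φ
    have hdt : ∀ t x, deriv (fun s => φ s x) t =
        deriv (fun s => φ s 0) t + (1 / 2) * deriv (deriv τ) t * x := by
      intro t x
      have hfun : (fun s => φ s x) = fun s => φ s 0 + (1 / 2) * deriv τ s * x :=
        funext fun s => hlin s x
      rw [hfun]
      exact ((hp_diff t).hasDerivAt.add
        (((hu_diff t).hasDerivAt.const_mul (1 / 2 : ℝ)).mul_const x)).deriv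
    -- extract the two ODEs
    have huode : ∀ t, deriv (deriv τ) t = 2 * α * deriv τ t := by
      intro t
      have e0 := h1 t 0
      have e1 := h1 t 1
      rw [hdt t 0, hdx t 0, hdd t 0, hlin t 0] at e0
      rw [hdt t 1, hdx t 1, hdd t 1, hlin t 1] at e1
      ring_nf at e0 e1 ⊢
      linarith
    have hpode : ∀ t, deriv (fun s => φ s 0) t =
        α * φ t 0 + (β / 2) * deriv τ t := by
      intro t
      have e0 := h1 t 0
      rw [hdt t 0, hdx t 0, hdd t 0, hlin t 0] at e0
      ring_nf at e0 ⊢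
      linarith
    -- solve the τ ODE
    have hu_exp : ∀ t, deriv τ t = deriv τ 0 * Real.exp (2 * α * t) :=
      ode_exp (2 * α) (deriv τ) hu_diff huode
    set c₂ : ℝ := deriv τ 0 / (2 * α) with hc₂
    have h2c : 2 * α * c₂ = deriv τ 0 := by
      rw [hc₂]; field_simp
    have hτform : ∀ t, τ t = c₂ * Real.exp (2 * α * t) + (τ 0 - c₂) := by
      intro t
      have key : ∀ s : ℝ, τ s - c₂ * Real.exp (2 * α * s)
          = τ 0 - c₂ * Real.exp (2 * α * 0) := by
        intro s
        apply is_const_of_deriv_eq_zero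
          (f := fun s => τ s - c₂ * Real.exp (2 * α * s))
        · exact hτd.sub (((differentiable_id.const_mul (2 * α)).exp).const_mul c₂)
        · intro y
          have hd : HasDerivAt (fun s => τ s - c₂ * Real.exp (2 * α * s))
              (deriv τ y - c₂ * (2 * α * Real.exp (2 * α * y))) y :=
            (hτd y).hasDerivAt.sub ((hexp_aux (2 * α) y).const_mul c₂)
          rw [hd.deriv, hu_exp y, ← h2c]
          ring
      have := key t
      simp only [mul_zero, Real.exp_zero, mul_one] at this
      linarith
    -- solve the p ODE
    set q : ℝ → ℝ := fun s => φ s 0 - β * c₂ * Real.exp (2 * α * s) with hq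
    have hqder : ∀ y, HasDerivAt q (α * q y) y := by
      intro y
      have hd : HasDerivAt q
          (deriv (fun s => φ s 0) y - β * c₂ * (2 * α * Real.exp (2 * α * y))) y :=
        (hp_diff y).hasDerivAt.sub ((hexp_aux (2 * α) y).const_mul (β * c₂))
      have heq : deriv (fun s => φ s 0) y - β * c₂ * (2 * α * Real.exp (2 * α * y))
          = α * q y := by
        rw [hpode y, hu_exp y, ← h2c, hq]
        ring
      rwa [heq] at hd
    have hq_exp : ∀ t, q t = q 0 * Real.exp (α * t) :=
      ode_exp α q (fun y => (hqder y).differentiableAt)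
        (fun y => by rw [(hqder y).deriv])
    refine ⟨q 0, c₂, τ 0 - c₂, hτform, ?_⟩
    intro t x
    have hqt' : φ t 0 - β * c₂ * Real.exp (2 * α * t) = q 0 * Real.exp (α * t) := by
      rw [← hq_exp t, hq]
    rw [hlin t x, hu_exp t, ← h2c]
    have hφt0 : φ t 0 = q 0 * Real.exp (α * t) + β * c₂ * Real.exp (2 * α * t) := by
      linarith
    rw [hφt0]; ring
  · rintro ⟨c₁, c₂, c₃, hτf, hφf⟩
    have hfunτ : τ = fun t => c₂ * Real.exp (2 * α * t) + c₃ := funext hτf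
    have hdτ : ∀ t, deriv τ t = c₂ * (2 * α * Real.exp (2 * α * t)) := by
      intro t
      rw [hfunτ]
      exact (((hexp_aux (2 * α) t).const_mul c₂).add_const c₃).deriv
    have hfunφt : ∀ t, φ t = fun x => c₁ * Real.exp (α * t)
        + c₂ * (α * x + β) * Real.exp (2 * α * t) := fun t => funext (hφf t)
    have hdx : ∀ t x, deriv (φ t) x = c₂ * (α * 1) * Real.exp (2 * α * t) := by
      intro t x
      rw [hfunφt t]
      exact (((((hasDerivAt_id x).const_mul α).add_const β).const_mul c₂).mul_const
        (Real.exp (2 * α * t))).const_add (c₁ * Real.exp (α * t)) |>.deriv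
    have hdd : ∀ t x, deriv (deriv (φ t)) x = 0 := by
      intro t x
      have : deriv (φ t) = fun _ => c₂ * (α * 1) * Real.exp (2 * α * t) :=
        funext (hdx t)
      rw [this]; simp
    have hdt : ∀ t x, deriv (fun s => φ s x) t =
        c₁ * (α * Real.exp (α * t))
          + c₂ * (α * x + β) * (2 * α * Real.exp (2 * α * t)) := by
      intro t x
      have hfun : (fun s => φ s x) = fun s => c₁ * Real.exp (α * s)
          + c₂ * (α * x + β) * Real.exp (2 * α * s) := funext fun s => hφf s x
      rw [hfun]
      exact (((hexp_aux α t).const_mul c₁).add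
        ((hexp_aux (2 * α) t).const_mul (c₂ * (α * x + β)))).deriv
    constructor
    · intro t x
      rw [hdτ t, hφf t x, hdt t x, hdx t x, hdd t x]
      ring
    · intro t x
      rw [hdτ t, hdx t x]
      ring
end

section
/- Let α ≠ 0 and β be real numbers, and define the smooth vector fields on ℝ²: X₁(t,x) = (1, 0), X₂(t,x) = (e^{2αt}, (αx+β)e^{2αt}), X₃(t,x) = (0, e^{αt}). Then their Lie brackets satisfy: [X₁, X₂] = 2α·X₂, [X₁, X₃] = α·X₃, and [X₂, X₃] = 0, where each identity holds pointwise on ℝ². -/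
/-!
Since `X₁` is constant, bracketing with it is just differentiation along `t`, which multiplies
`e^{2αt}` by `2α` and `e^{αt}` by `α`. In `[X₂, X₃]` both terms equal `α e^{3αt} ∂ₓ`: the
`e^{αt}` of `X₃` is hit by the `t`-component `e^{2αt}` of `X₂`, and the `αx` of `X₂` by the
`x`-component `e^{αt}` of `X₃`.
-/

noncomputable def lieBracketR2 (V W : ℝ × ℝ → ℝ × ℝ) : ℝ × ℝ → ℝ × ℝ :=
  fun p => fderiv ℝ W p (V p) - fderiv ℝ V p (W p)

theorem lieBracketR2_const_left (v : ℝ × ℝ) (W : ℝ × ℝ → ℝ × ℝ) (p : ℝ × ℝ) :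
    lieBracketR2 (fun _ => v) W p = fderiv ℝ W p v := by
  simp [lieBracketR2]

theorem hasFDerivAt_exp_const_mul_fst (c : ℝ) (p : ℝ × ℝ) :
    HasFDerivAt (fun q : ℝ × ℝ => Real.exp (c * q.1))
      ((c * Real.exp (c * p.1)) • ContinuousLinearMap.fst ℝ ℝ ℝ) p := by
  have h : HasDerivAt (fun t : ℝ => Real.exp (c * t)) (c * Real.exp (c * p.1)) p.1 := by
    simpa [mul_comm] using ((hasDerivAt_id p.1).const_mul c).exp
  exact h.comp_hasFDerivAt p hasFDerivAt_fst

namespace AffineDrift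

/-- Points of `ℝ × ℝ` are `(t, x)`; the constant field `X₁ = (1, 0)` needs no name. -/
noncomputable def X₂ (α β : ℝ) : ℝ × ℝ → ℝ × ℝ :=
  fun q => (Real.exp (2 * α * q.1), (α * q.2 + β) * Real.exp (2 * α * q.1))

noncomputable def X₃ (α : ℝ) : ℝ × ℝ → ℝ × ℝ :=
  fun q => (0, Real.exp (α * q.1))

theorem fderiv_X₂_apply (α β : ℝ) (p v : ℝ × ℝ) :
    fderiv ℝ (X₂ α β) p v =
      (2 * α * Real.exp (2 * α * p.1) * v.1,
        α * v.2 * Real.exp (2 * α * p.1) + (α * p.2 + β) * (2 * α * Real.exp (2 * α * p.1) * v.1)) := by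
  have hexp := hasFDerivAt_exp_const_mul_fst (2 * α) p
  have haff : HasFDerivAt (fun q : ℝ × ℝ => α * q.2 + β) (α • ContinuousLinearMap.snd ℝ ℝ ℝ) p := by
    simpa using (hasFDerivAt_snd.const_mul α).add_const β
  have hX₂ : HasFDerivAt (X₂ α β) _ p := hexp.prodMk (haff.mul hexp)
  rw [hX₂.fderiv]
  simp only [ContinuousLinearMap.prod_apply, add_apply,
    smul_apply, ContinuousLinearMap.coe_fst', ContinuousLinearMap.coe_snd',
    smul_eq_mul, Prod.mk.injEq, true_and]
  ring

theorem fderiv_X₃_apply (α : ℝ) (p v : ℝ × ℝ) :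
    fderiv ℝ (X₃ α) p v = (0, α * Real.exp (α * p.1) * v.1) := by
  have hX₃ : HasFDerivAt (X₃ α) _ p :=
    (hasFDerivAt_const (0 : ℝ) p).prodMk (hasFDerivAt_exp_const_mul_fst α p)
  rw [hX₃.fderiv]
  simp

theorem lieBracketR2_X₁_X₂ (α β : ℝ) (p : ℝ × ℝ) :
    lieBracketR2 (fun _ => (1, 0)) (X₂ α β) p = (2 * α) • X₂ α β p := by
  rw [lieBracketR2_const_left, fderiv_X₂_apply]
  simp only [X₂, mul_one, mul_zero, zero_mul, zero_add, Prod.smul_mk, smul_eq_mul, Prod.mk.injEq,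
    true_and]
  ring

theorem lieBracketR2_X₁_X₃ (α : ℝ) (p : ℝ × ℝ) :
    lieBracketR2 (fun _ => (1, 0)) (X₃ α) p = α • X₃ α p := by
  rw [lieBracketR2_const_left, fderiv_X₃_apply]
  simp [X₃]

theorem lieBracketR2_X₂_X₃ (α β : ℝ) (p : ℝ × ℝ) :
    lieBracketR2 (X₂ α β) (X₃ α) p = 0 := by
  simp [lieBracketR2, fderiv_X₂_apply, fderiv_X₃_apply, X₂, X₃]

end AffineDrift

open AffineDrift in
theorem affine_drift_symmetry_algebra_brackets_general (α β : ℝ) :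
    (∀ p : ℝ × ℝ,
        lieBracketR2 (fun _ => ((1 : ℝ), (0 : ℝ)))
          (fun q => (Real.exp (2 * α * q.1), (α * q.2 + β) * Real.exp (2 * α * q.1))) p =
        (2 * α) • (Real.exp (2 * α * p.1), (α * p.2 + β) * Real.exp (2 * α * p.1))) ∧
    (∀ p : ℝ × ℝ,
        lieBracketR2 (fun _ => ((1 : ℝ), (0 : ℝ)))
          (fun q => ((0 : ℝ), Real.exp (α * q.1))) p =
        α • ((0 : ℝ), Real.exp (α * p.1))) ∧
    (∀ p : ℝ × ℝ,
        lieBracketR2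
          (fun q => (Real.exp (2 * α * q.1), (α * q.2 + β) * Real.exp (2 * α * q.1)))
          (fun q => ((0 : ℝ), Real.exp (α * q.1))) p = (0, 0)) :=
  ⟨lieBracketR2_X₁_X₂ α β, lieBracketR2_X₁_X₃ α, lieBracketR2_X₂_X₃ α β⟩

/-- The generators `X₁ = ∂/∂t`, `X₂ = e^{2αt} ∂/∂t + (αx+β)e^{2αt} ∂/∂x`,
`X₃ = e^{αt} ∂/∂x` of the symmetry algebra of `dX = (αX+β)dt + dW` satisfy
`[X₁,X₂] = 2α·X₂`, `[X₁,X₃] = α·X₃`, `[X₂,X₃] = 0`. -/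
theorem affine_drift_symmetry_algebra_brackets (α β : ℝ) (hα : α ≠ 0) :
    (∀ p : ℝ × ℝ,
        lieBracketR2 (fun _ => ((1 : ℝ), (0 : ℝ)))
          (fun q => (Real.exp (2 * α * q.1), (α * q.2 + β) * Real.exp (2 * α * q.1))) p =
        (2 * α) • (Real.exp (2 * α * p.1), (α * p.2 + β) * Real.exp (2 * α * p.1))) ∧
    (∀ p : ℝ × ℝ,
        lieBracketR2 (fun _ => ((1 : ℝ), (0 : ℝ)))
          (fun q => ((0 : ℝ), Real.exp (α * q.1))) p =
        α • ((0 : ℝ), Real.exp (α * p.1))) ∧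
    (∀ p : ℝ × ℝ,
        lieBracketR2
          (fun q => (Real.exp (2 * α * q.1), (α * q.2 + β) * Real.exp (2 * α * q.1)))
          (fun q => ((0 : ℝ), Real.exp (α * q.1))) p = (0, 0)) :=
  affine_drift_symmetry_algebra_brackets_general α β
end
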